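/- Let K be an ℕ-valued random variable whose PMF is f_K(k) = ∫_0^∞ ((μx)^k/k!) e^{-μx} f_U(x) dx with f_U(x) = (3.5^{4.5}/Γ(4.5)) x^{3.5} e^{-3.5x} and μ > 0. Then the expectation E[1/(K+1)] = Σ_{k=0}^∞ f_K(k)/(k+1) equals (1/μ)·[1 − (1 + μ/3.5)^{−3.5}]. -/

import Mathlib

/-! Given the cell size `x`, the number of contenders is Poisson with mean `μ x`, and the
exponential series gives `E[1/(K+1) | x] = (1 - e^{-μx}) / (μx) ≤ 1`. This bound lets dominated
convergence exchange the sum over `k` with the integral over `x`. Against the Gamma(`a`, `b`)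
density the remaining integral is a difference of two Gamma integrals of order `a - 1`, which
equals `b / ((a - 1) μ) · (1 - (1 + μ/b)^{-(a-1)})`; for `a = 4.5`, `b = 3.5` the prefactor is `1/μ`. -/

open MeasureTheory Real Set ProbabilityTheory
open scoped Nat

lemma hasSum_pow_div_factorial_succ {y : ℝ} (hy : y ≠ 0) :
    HasSum (fun k : ℕ => y ^ k / (k + 1)!) ((exp y - 1) / y) := by
  have hexp : HasSum (fun k : ℕ => y ^ (k + 1) / (k + 1)!) (exp y - 1) := by
    rw [exp_eq_exp_ℝ]
    simpa using (hasSum_nat_add_iff' 1).2 (NormedSpace.expSeries_div_hasSum_exp y)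
  refine (hexp.div_const y).congr_fun fun k => ?_
  rw [pow_succ]
  field_simp

lemma hasSum_poisson_div_succ {y : ℝ} (hy : y ≠ 0) :
    HasSum (fun k : ℕ => y ^ k / k ! * exp (-y) / (k + 1)) ((1 - exp (-y)) / y) := by
  have h := (hasSum_pow_div_factorial_succ hy).mul_right (exp (-y))
  rw [show (exp y - 1) / y * exp (-y) = (1 - exp (-y)) / y by rw [exp_neg]; field_simp] at h
  refine h.congr_fun fun k => ?_
  rw [Nat.factorial_succ]
  push_cast
  field_simp

lemma abs_one_sub_exp_neg_div_le_one {y : ℝ} (hy : 0 < y) : |(1 - exp (-y)) / y| ≤ 1 := by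
  have h : 0 ≤ 1 - exp (-y) := sub_nonneg.2 (exp_le_one_iff.2 (by linarith))
  rw [abs_of_nonneg (div_nonneg h hy.le), div_le_one hy]
  linarith [add_one_le_exp (-y)]

lemma hasSum_integral_poisson_mul_div_succ {μ : ℝ} (hμ : 0 < μ) {g : ℝ → ℝ}
    (hg : IntegrableOn g (Ioi 0)) :
    HasSum (fun k : ℕ => (∫ x in Ioi 0, (μ * x) ^ k / k ! * exp (-(μ * x)) * g x) / (k + 1))
      (∫ x in Ioi 0, (1 - exp (-(μ * x))) / (μ * x) * g x) := by
  set p : ℕ → ℝ → ℝ := fun k x => (μ * x) ^ k / k ! * exp (-(μ * x)) / (k + 1)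
  have hp_nonneg : ∀ k, ∀ x ∈ Ioi (0 : ℝ), 0 ≤ p k x := fun k x hx => by
    have : 0 < μ * x := mul_pos hμ hx
    positivity
  have hp_sum : ∀ x ∈ Ioi (0 : ℝ), HasSum (fun k => p k x) ((1 - exp (-(μ * x))) / (μ * x)) :=
    fun x hx => hasSum_poisson_div_succ (mul_pos hμ hx).ne'
  have hterm : ∀ k : ℕ, (∫ x in Ioi 0, (μ * x) ^ k / k ! * exp (-(μ * x)) * g x) / (k + 1) =
      ∫ x in Ioi 0, p k x * g x := fun k => by
    rw [← integral_div]
    congr 1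
    ext x
    ring
  simp_rw [hterm]
  have hbound_integrable :
      IntegrableOn (fun x => (1 - exp (-(μ * x))) / (μ * x) * ‖g x‖) (Ioi 0) := by
    have hmeas : Measurable fun x : ℝ => (1 - exp (-(μ * x))) / (μ * x) := by fun_prop
    refine hg.norm.mono' (hmeas.aestronglyMeasurable.mul hg.norm.1) ?_
    refine (ae_restrict_iff' measurableSet_Ioi).2 (ae_of_all _ fun x hx => ?_)
    rw [norm_mul, norm_norm, Real.norm_eq_abs]
    exact mul_le_of_le_one_left (norm_nonneg _) (abs_one_sub_exp_neg_div_le_one (mul_pos hμ hx))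
  refine hasSum_integral_of_dominated_convergence (fun k x => p k x * ‖g x‖)
    (fun k => ?_) (fun k => ?_) ?_ ?_ ?_
  · exact (by fun_prop : Continuous (p k)).aestronglyMeasurable.mul hg.1
  · refine (ae_restrict_iff' measurableSet_Ioi).2 (ae_of_all _ fun x hx => ?_)
    rw [norm_mul, Real.norm_of_nonneg (hp_nonneg k x hx)]
  · exact (ae_restrict_iff' measurableSet_Ioi).2 (ae_of_all _ fun x hx =>
      ((hp_sum x hx).mul_right ‖g x‖).summable)
  · refine hbound_integrable.congr_fun (fun x hx => ?_) measurableSet_Ioi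
    exact ((hp_sum x hx).mul_right ‖g x‖).tsum_eq.symm
  · exact (ae_restrict_iff' measurableSet_Ioi).2 (ae_of_all _ fun x hx =>
      (hp_sum x hx).mul_right (g x))

lemma integrable_gammaPDFReal {a r : ℝ} (ha : 0 < a) (hr : 0 < r) :
    Integrable (gammaPDFReal a r) := by
  refine ⟨(measurable_gammaPDFReal a r).aestronglyMeasurable,
    (hasFiniteIntegral_iff_ofReal (ae_of_all _ (gammaPDFReal_nonneg ha hr))).2 ?_⟩
  change ∫⁻ x, gammaPDF a r x < ⊤
  simp [lintegral_gammaPDF_eq_one ha hr]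

lemma integrableOn_rpow_mul_exp_neg_mul_Ioi {s r : ℝ} (hs : 0 < s) (hr : 0 < r) :
    IntegrableOn (fun x : ℝ => x ^ (s - 1) * exp (-(r * x))) (Ioi 0) := by
  refine Integrable.of_integral_ne_zero ?_
  rw [integral_rpow_mul_exp_neg_mul_Ioi hs hr]
  positivity

lemma integral_one_sub_exp_neg_div_mul_gammaPDFReal {a b μ : ℝ} (ha : 1 < a) (hb : 0 < b)
    (hμ : 0 < μ) :
    ∫ x in Ioi 0, (1 - exp (-(μ * x))) / (μ * x) * gammaPDFReal a b x =
      b / ((a - 1) * μ) * (1 - (1 + μ / b) ^ (-(a - 1))) := by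
  obtain ⟨s, hs, rfl⟩ : ∃ s, 0 < s ∧ a = s + 1 := ⟨a - 1, by linarith, by ring⟩
  have hμb : 0 < μ + b := by linarith
  have hpoint : ∀ x ∈ Ioi (0 : ℝ), (1 - exp (-(μ * x))) / (μ * x) * gammaPDFReal (s + 1) b x =
      b ^ (s + 1) / (Gamma (s + 1) * μ) *
        (x ^ (s - 1) * exp (-(b * x)) - x ^ (s - 1) * exp (-((μ + b) * x))) := by
    intro x (hx : 0 < x)
    have hxs : x ^ s = x ^ (s - 1) * x := by rw [rpow_sub_one hx.ne']; field_simp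
    rw [gammaPDFReal, if_pos hx.le, add_sub_cancel_right, add_mul, neg_add, exp_add, hxs]
    field_simp
  rw [setIntegral_congr_fun measurableSet_Ioi hpoint, integral_const_mul,
    integral_sub (integrableOn_rpow_mul_exp_neg_mul_Ioi hs hb)
      (integrableOn_rpow_mul_exp_neg_mul_Ioi hs hμb),
    integral_rpow_mul_exp_neg_mul_Ioi hs hb, integral_rpow_mul_exp_neg_mul_Ioi hs hμb,
    Gamma_add_one hs.ne', add_sub_cancel_right, rpow_add_one hb.ne', div_rpow zero_le_one hb.le,
    div_rpow zero_le_one hμb.le, one_rpow, show 1 + μ / b = (μ + b) / b by field_simp; ring,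
    rpow_neg (by positivity), div_rpow hμb.le hb.le, inv_div]
  have hΓ := Gamma_pos_of_pos hs
  have hbs := rpow_pos_of_pos hb s
  have hμbs := rpow_pos_of_pos hμb s
  field_simp

/-- Access probability E[1/(K+1)] for the mixed-Poisson number of contending users. -/
theorem access_probability (μ : ℝ) (hμ : 0 < μ) (fK : ℕ → ℝ)
    (hfK : ∀ k : ℕ, fK k = ∫ x in Set.Ioi (0:ℝ),
      ((μ * x) ^ k / (Nat.factorial k : ℝ)) * Real.exp (-(μ * x)) *
        ((3.5 : ℝ) ^ (4.5 : ℝ) / Real.Gamma 4.5 * x ^ (3.5 : ℝ) * Real.exp (-3.5 * x))) :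
    ∑' k : ℕ, fK k / (k + 1 : ℝ) = (1 / μ) * (1 - (1 + μ / 3.5) ^ (-(3.5 : ℝ))) := by
  have hfK_gamma : ∀ k : ℕ, fK k =
      ∫ x in Ioi 0, (μ * x) ^ k / k ! * exp (-(μ * x)) * gammaPDFReal 4.5 3.5 x := fun k => by
    refine (hfK k).trans (setIntegral_congr_fun measurableSet_Ioi fun x (hx : 0 < x) => ?_)
    rw [gammaPDFReal, if_pos hx.le]
    norm_num
  simp_rw [hfK_gamma]
  rw [(hasSum_integral_poisson_mul_div_succ hμ
      (integrable_gammaPDFReal (by norm_num) (by norm_num)).integrableOn).tsum_eq,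
    integral_one_sub_exp_neg_div_mul_gammaPDFReal (by norm_num) (by norm_num) hμ]
  field_simp
  norm_num
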